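/- If ν : ℝ≥0 → ℝ satisfies 0 < m ≤ ν(s) ≤ L and s ↦ ν(s)s is Lipschitz with constant L, then the vector field F(x) = ν(‖x‖)x on ℝ² satisfies ‖F(x) − F(y)‖ ≤ 3L‖x − y‖ for all x, y. -/

import Mathlib

/-!
Write `φ s = ν s * s`. Taking `s₁ = 0` in the Lipschitz bound for `φ` gives `|ν s| ≤ L` for `s > 0`.
For `x ≠ 0` split
`ν ‖x‖ • x - ν ‖y‖ • y = ν ‖x‖ • (x - y) + (ν ‖x‖ - ν ‖y‖) • y`: the first term is at most `L ‖x - y‖`,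
and `(ν a - ν b) b = (φ a - φ b) - ν a (a - b)` bounds the second by `2 L |‖x‖ - ‖y‖|`.
For `x = 0` the left side is `|φ ‖y‖ - φ 0| ≤ L ‖y‖`.
-/

theorem abs_le_of_lipschitz_mul_self {ν : ℝ → ℝ} {L : ℝ}
    (hlip : ∀ s₁ s₂, 0 ≤ s₁ → 0 ≤ s₂ → |ν s₂ * s₂ - ν s₁ * s₁| ≤ L * |s₂ - s₁|)
    {s : ℝ} (hs : 0 < s) : |ν s| ≤ L := by
  have h := hlip 0 s le_rfl hs.le
  rw [mul_zero, sub_zero, sub_zero, abs_mul, abs_of_pos hs] at h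
  exact le_of_mul_le_mul_right h hs

theorem abs_sub_mul_le_of_lipschitz_mul_self {ν : ℝ → ℝ} {L : ℝ}
    (hlip : ∀ s₁ s₂, 0 ≤ s₁ → 0 ≤ s₂ → |ν s₂ * s₂ - ν s₁ * s₁| ≤ L * |s₂ - s₁|)
    {a b : ℝ} (ha : 0 < a) (hb : 0 ≤ b) : |ν a - ν b| * b ≤ 2 * L * |a - b| := by
  calc |ν a - ν b| * b = |(ν a * a - ν b * b) - ν a * (a - b)| := by
        rw [← abs_of_nonneg hb, ← abs_mul, abs_of_nonneg hb]; ring_nf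
    _ ≤ |ν a * a - ν b * b| + |ν a| * |a - b| := by rw [← abs_mul]; exact abs_sub _ _
    _ ≤ L * |a - b| + L * |a - b| := by
        gcongr
        · exact hlip b a hb ha.le
        · exact abs_le_of_lipschitz_mul_self hlip ha
    _ = 2 * L * |a - b| := by ring

theorem norm_smul_sub_smul_le_of_lipschitz_mul_self {E : Type*} [NormedAddCommGroup E]
    [NormedSpace ℝ E] {ν : ℝ → ℝ} {L : ℝ}
    (hlip : ∀ s₁ s₂, 0 ≤ s₁ → 0 ≤ s₂ → |ν s₂ * s₂ - ν s₁ * s₁| ≤ L * |s₂ - s₁|) (x y : E) :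
    ‖ν ‖x‖ • x - ν ‖y‖ • y‖ ≤ 3 * L * ‖x - y‖ := by
  rcases eq_or_ne x 0 with rfl | hx
  · have hy : ‖ν ‖y‖ • y‖ ≤ L * ‖y‖ := by
      simpa [norm_smul, abs_mul] using hlip 0 ‖y‖ le_rfl (norm_nonneg y)
    have hLy : 0 ≤ L * ‖y‖ := (norm_nonneg _).trans hy
    simp only [smul_zero, zero_sub, norm_neg]
    linarith
  have hx₀ : 0 < ‖x‖ := norm_pos_iff.2 hx
  have hνx : |ν ‖x‖| ≤ L := abs_le_of_lipschitz_mul_self hlip hx₀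
  have hL : 0 ≤ L := (abs_nonneg _).trans hνx
  have hxy : |‖x‖ - ‖y‖| ≤ ‖x - y‖ := abs_norm_sub_norm_le x y
  calc ‖ν ‖x‖ • x - ν ‖y‖ • y‖ = ‖ν ‖x‖ • (x - y) + (ν ‖x‖ - ν ‖y‖) • y‖ := by
        rw [smul_sub, sub_smul, sub_add_sub_cancel]
    _ ≤ |ν ‖x‖| * ‖x - y‖ + |ν ‖x‖ - ν ‖y‖| * ‖y‖ := by
        rw [← Real.norm_eq_abs, ← Real.norm_eq_abs, ← norm_smul, ← norm_smul]
        exact norm_add_le _ _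
    _ ≤ L * ‖x - y‖ + 2 * L * ‖x - y‖ := by
        gcongr ?_ + ?_
        · gcongr
        · calc |ν ‖x‖ - ν ‖y‖| * ‖y‖ ≤ 2 * L * |‖x‖ - ‖y‖| :=
                abs_sub_mul_le_of_lipschitz_mul_self hlip hx₀ (norm_nonneg y)
            _ ≤ 2 * L * ‖x - y‖ := by gcongr
    _ = 3 * L * ‖x - y‖ := by ring

theorem stmt_3_general (ν : ℝ → ℝ) (L : ℝ)
    (hlip : ∀ s₁ s₂, 0 ≤ s₁ → 0 ≤ s₂ → |ν s₂ * s₂ - ν s₁ * s₁| ≤ L * |s₂ - s₁|)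
    (x y : EuclideanSpace ℝ (Fin 2)) :
    ‖ν ‖x‖ • x - ν ‖y‖ • y‖ ≤ 3 * L * ‖x - y‖ :=
  norm_smul_sub_smul_le_of_lipschitz_mul_self hlip x y

/-- Lipschitz continuity of F(x) = ν(‖x‖)·x on ℝ² with constant 3L. -/
theorem stmt_3 (ν : ℝ → ℝ) (m L : ℝ) (hm : 0 < m)
    (hbound : ∀ s, 0 ≤ s → m ≤ ν s ∧ ν s ≤ L)
    (hlip : ∀ s₁ s₂, 0 ≤ s₁ → 0 ≤ s₂ → |ν s₂ * s₂ - ν s₁ * s₁| ≤ L * |s₂ - s₁|)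
    (x y : EuclideanSpace ℝ (Fin 2)) :
    ‖ν ‖x‖ • x - ν ‖y‖ • y‖ ≤ 3 * L * ‖x - y‖ :=
  stmt_3_general ν L hlip x y
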